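/- arXiv:1403.3004 — 5 statements merged into one kernel-verified Lean document; each statement's English description precedes it below -/
import Mathlib

section
/- Let K ⊂ ℝ² be a compact connected set with L := H¹(K) < ∞. Then there exists a Lipschitz surjective map f : [0, L] → K; in particular K is arcwise connected. -/
/-!
Fix `ε > 0` and a maximal `ε`-separated set `S ⊆ K`. If `#S ≥ 2`, connectedness of `K` makes
`dist s` map the part of `K` in the ball of radius `ε / 2` around `s ∈ S` onto `[0, ε / 2]`, so
these disjoint balls each carry `H¹`-mass at least `ε / 2` and `(#S - 1) ε ≤ 2 L`. Connectedness
also forces the graph on `S` with edges of length `≤ 2ε` to be connected; inserting a detour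
`a → b → a` for each new vertex `b` yields a walk of `2 (#S - 1)` steps through all of `S`, and the
polygonal path along it, run at speed `8`, fits into `[0, L]` and lies within Hausdorff distance
`2ε` of `K`. By Arzelà–Ascoli these uniformly `8`-Lipschitz maps converge uniformly along a
subsequence as `ε → 0`, and the limit maps `[0, L]` onto `K`.
-/

open MeasureTheory Metric Set Filter Topology
open scoped ENNReal NNReal

section Lipschitz

variable {α : Type*} [PseudoMetricSpace α] {f : ℝ → α} {d : ℝ≥0}

theorem LipschitzOnWith.Icc_trans {a b c : ℝ} (hab : LipschitzOnWith d f (Icc a b))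
    (hbc : LipschitzOnWith d f (Icc b c)) : LipschitzOnWith d f (Icc a c) := by
  refine LipschitzOnWith.of_dist_le_mul fun s hs t ht => ?_
  wlog hst : s ≤ t generalizing s t
  · rw [dist_comm, dist_comm s]; exact this t ht s hs (le_of_not_ge hst)
  rcases le_total t b with htb | hbt
  · exact hab.dist_le_mul s ⟨hs.1, hst.trans htb⟩ t ⟨ht.1, htb⟩
  rcases le_total b s with hbs | hsb
  · exact hbc.dist_le_mul s ⟨hbs, hs.2⟩ t ⟨hbs.trans hst, ht.2⟩
  have hb₁ : b ∈ Icc a b := ⟨hs.1.trans hsb, le_rfl⟩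
  have hb₂ : b ∈ Icc b c := ⟨le_rfl, hbt.trans ht.2⟩
  calc dist (f s) (f t) ≤ dist (f s) (f b) + dist (f b) (f t) := dist_triangle _ _ _
    _ ≤ d * dist s b + d * dist b t :=
        add_le_add (hab.dist_le_mul s ⟨hs.1, hsb⟩ b hb₁) (hbc.dist_le_mul b hb₂ t ⟨hbt, ht.2⟩)
    _ = d * dist s t := by
        rw [Real.dist_eq, Real.dist_eq, Real.dist_eq, abs_of_nonpos (by linarith),
          abs_of_nonpos (by linarith), abs_of_nonpos (by linarith)]
        ring

theorem lipschitzOnWith_Ici_of_forall_Icc_natCast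
    (hf : ∀ n : ℕ, LipschitzOnWith d f (Icc n (n + 1))) : LipschitzOnWith d f (Ici 0) := by
  have hIcc : ∀ n : ℕ, LipschitzOnWith d f (Icc 0 (n + 1)) := by
    intro n
    induction n with
    | zero => simpa using hf 0
    | succ n ih =>
      have := hf (n + 1)
      push_cast at this ⊢
      exact ih.Icc_trans this
  intro s hs t ht
  have hle : max s t ≤ ⌈max s t⌉₊ + 1 := by linarith [Nat.le_ceil (max s t)]
  exact hIcc ⌈max s t⌉₊ ⟨hs, (le_max_left s t).trans hle⟩ ⟨ht, (le_max_right s t).trans hle⟩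

end Lipschitz

section PiecewiseLinear

variable {V P : Type*} [NormedAddCommGroup V] [NormedSpace ℝ V] [MetricSpace P]
  [NormedAddTorsor V P]

noncomputable def piecewiseLinear (p : ℕ → P) (t : ℝ) : P :=
  AffineMap.lineMap (p ⌊t⌋₊) (p (⌊t⌋₊ + 1)) (t - ⌊t⌋₊)

variable {p : ℕ → P} {d : ℝ≥0}

@[simp]
theorem piecewiseLinear_natCast (p : ℕ → P) (n : ℕ) : piecewiseLinear p n = p n := by
  simp [piecewiseLinear]

theorem piecewiseLinear_eqOn_Icc (p : ℕ → P) (n : ℕ) :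
    EqOn (piecewiseLinear p) (fun t => AffineMap.lineMap (p n) (p (n + 1)) (t - n))
      (Icc n (n + 1)) := by
  rintro t ⟨hnt, htn⟩
  rcases htn.eq_or_lt with rfl | htn
  · exact_mod_cast (piecewiseLinear_natCast p (n + 1)).trans (by simp)
  · have : ⌊t⌋₊ = n := (Nat.floor_eq_iff ((Nat.cast_nonneg n).trans hnt)).2 ⟨hnt, htn⟩
    simp [piecewiseLinear, this]

theorem lipschitzOnWith_piecewiseLinear (hp : ∀ n, dist (p n) (p (n + 1)) ≤ d) :
    LipschitzOnWith d (piecewiseLinear p) (Ici 0) := by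
  refine lipschitzOnWith_Ici_of_forall_Icc_natCast fun n => ?_
  refine LipschitzOnWith.of_dist_le_mul fun s hs t ht => ?_
  rw [piecewiseLinear_eqOn_Icc p n hs, piecewiseLinear_eqOn_Icc p n ht, dist_lineMap_lineMap,
    dist_sub_right, mul_comm]
  exact mul_le_mul_of_nonneg_right (hp n) dist_nonneg

theorem dist_piecewiseLinear_floor_le (hp : ∀ n, dist (p n) (p (n + 1)) ≤ d) {t : ℝ}
    (ht : 0 ≤ t) : dist (piecewiseLinear p t) (p ⌊t⌋₊) ≤ d := by
  rw [piecewiseLinear, dist_lineMap_left, Real.norm_eq_abs,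
    abs_of_nonneg (sub_nonneg.2 (Nat.floor_le ht))]
  have : t - ⌊t⌋₊ ≤ 1 := by linarith [Nat.lt_floor_add_one t]
  calc (t - ⌊t⌋₊) * dist (p ⌊t⌋₊) (p (⌊t⌋₊ + 1)) ≤ 1 * d := by
        gcongr
        exact hp _
    _ = d := one_mul _

end PiecewiseLinear

section Walk

variable {α : Type*} {R : α → α → Prop}

theorem List.IsChain.exists_toFinset_eq_insert [DecidableEq α] (hR : ∀ a b, R a b → R b a)
    {l : List α} (hl : l.IsChain R) {a b : α} (ha : a ∈ l) (hab : R a b) :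
    ∃ l' : List α, l'.IsChain R ∧ l'.toFinset = insert b l.toFinset ∧
      l'.length = l.length + 2 := by
  obtain ⟨l₁, l₂, rfl⟩ := List.append_of_mem ha
  refine ⟨l₁ ++ a :: b :: a :: l₂, ?_, ?_, by simp; omega⟩
  · rw [List.isChain_split] at hl ⊢
    exact ⟨hl.1, List.isChain_cons_cons.2 ⟨hab, List.isChain_cons_cons.2 ⟨hR a b hab, hl.2⟩⟩⟩
  · ext x
    simp only [List.mem_toFinset, List.mem_append, List.mem_cons, Finset.mem_insert]
    tauto

theorem Finset.exists_isChain_toFinset_eq [DecidableEq α] (hR : ∀ a b, R a b → R b a)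
    {S : Finset α} (hS : S.Nonempty)
    (hcross : ∀ A : Finset α, A.Nonempty → A ⊂ S → ∃ a ∈ A, ∃ b ∈ S, b ∉ A ∧ R a b) :
    ∃ l : List α, l.IsChain R ∧ l.toFinset = S ∧ l.length + 1 = 2 * S.card := by
  have hgrow : ∀ k : ℕ, ∃ l : List α, l.IsChain R ∧ l.toFinset ⊆ S ∧
      l.length + 1 = 2 * l.toFinset.card ∧ min (k + 1) S.card ≤ l.toFinset.card := by
    intro k
    induction k with
    | zero =>
      obtain ⟨s, hs⟩ := hS
      exact ⟨[s], by simp, by simpa using hs, by simp, by simp⟩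
    | succ k ih =>
      obtain ⟨l, hl, hlS, hlen, hk⟩ := ih
      rcases hlS.eq_or_ssubset with hlS | hlS
      · exact ⟨l, hl, hlS.subset, hlen, hlS ▸ min_le_right _ _⟩
      obtain ⟨a, ha, b, hbS, hbl, hab⟩ := hcross _ (Finset.card_pos.1 (by omega)) hlS
      obtain ⟨l', hl', hl'l, hl'len⟩ :=
        hl.exists_toFinset_eq_insert hR (List.mem_toFinset.1 ha) hab
      refine ⟨l', hl', hl'l ▸ Finset.insert_subset hbS hlS.subset, ?_, ?_⟩ <;>
        rw [hl'l, Finset.card_insert_of_notMem hbl] <;> omega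
  obtain ⟨l, hl, hlS, hlen, hcard⟩ := hgrow S.card
  have hlS : l.toFinset = S := Finset.eq_of_subset_of_card_le hlS (by simpa using hcard)
  exact ⟨l, hl, hlS, hlS ▸ hlen⟩

theorem List.IsChain.exists_seq {l : List α} (hl : l.IsChain R) (hne : l ≠ [])
    (hrefl : ∀ x ∈ l, R x x) :
    ∃ p : ℕ → α, (∀ n, R (p n) (p (n + 1))) ∧ (∀ n, p n ∈ l) ∧
      ∀ x ∈ l, ∃ n < l.length, p n = x := by
  have hlen := List.length_pos_iff.2 hne
  let p : ℕ → α := fun n => l[min n (l.length - 1)]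
  refine ⟨p, fun n => ?_, fun n => List.getElem_mem _, fun x hx => ?_⟩
  · by_cases h : n + 1 < l.length
    · have := List.isChain_iff_getElem.1 hl n h
      simpa [p, Nat.min_eq_left (by omega : n ≤ l.length - 1),
        Nat.min_eq_left (by omega : n + 1 ≤ l.length - 1)] using this
    · have : p (n + 1) = p n := by simp only [p]; congr 1; omega
      exact this ▸ hrefl _ (List.getElem_mem _)
  · obtain ⟨n, hn, rfl⟩ := List.getElem_of_mem hx
    exact ⟨n, hn, by simp only [p]; congr 1; omega⟩

theorem Finset.exists_walk_visiting_all (hR : ∀ a b, R a b → R b a) (hrefl : ∀ a, R a a)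
    {S : Finset α} (hS : S.Nonempty)
    (hcross : ∀ A : Finset α, A.Nonempty → A ⊂ S → ∃ a ∈ A, ∃ b ∈ S, b ∉ A ∧ R a b) :
    ∃ p : ℕ → α, (∀ n, R (p n) (p (n + 1))) ∧ (∀ n, p n ∈ S) ∧
      ∀ s ∈ S, ∃ n, n + 2 ≤ 2 * S.card ∧ p n = s := by
  classical
  obtain ⟨l, hl, hlS, hlen⟩ := S.exists_isChain_toFinset_eq hR hS hcross
  have hne : l ≠ [] := by rintro rfl; simp [← hlS] at hS
  obtain ⟨p, hp, hpl, hlp⟩ := hl.exists_seq hne fun x _ => hrefl x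
  refine ⟨p, hp, fun n => by simpa [← hlS] using hpl n, fun s hs => ?_⟩
  obtain ⟨n, hn, rfl⟩ := hlp s (by simpa [← hlS] using hs)
  exact ⟨n, by omega, rfl⟩

end Walk

section Net

variable {X : Type*} [MetricSpace X] {K : Set X}

theorem IsCompact.exists_separated_finset_net (hK : IsCompact K) {ε : ℝ} (hε : 0 < ε) :
    ∃ S : Finset X, ↑S ⊆ K ∧ (S : Set X).Pairwise (ε < dist · ·) ∧
      ∀ x ∈ K, ∃ s ∈ S, dist x s ≤ ε := by
  lift ε to ℝ≥0 using hε.le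
  have hpack : packingNumber ε K ≠ ⊤ := by
    obtain ⟨N, -, hNfin, hN⟩ :=
      exists_finite_isCover_of_isCompact (ε := ε / 2) (by simpa using hε.ne') hK
    refine ne_top_of_le_ne_top (Set.encard_ne_top_iff.2 hNfin) ?_
    calc packingNumber ε K = packingNumber (2 * (ε / 2)) K := by
          rw [mul_div_cancel₀ _ two_ne_zero]
      _ ≤ externalCoveringNumber (ε / 2) K := packingNumber_two_mul_le_externalCoveringNumber _ _
      _ ≤ N.encard := hN.externalCoveringNumber_le_encard
  have hfin : (maximalSeparatedSet ε K).Finite := by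
    rw [← Set.encard_ne_top_iff, encard_maximalSeparatedSet hpack]
    exact hpack
  refine ⟨hfin.toFinset, by simpa using maximalSeparatedSet_subset, ?_, ?_⟩
  · intro a ha b hb hab
    have : (ε : ℝ≥0∞) < edist a b :=
      isSeparated_maximalSeparatedSet (by simpa using ha) (by simpa using hb) hab
    rw [edist_nndist, ENNReal.coe_lt_coe] at this
    exact_mod_cast this
  · intro x hx
    obtain ⟨s, hs, hxs⟩ := isCover_maximalSeparatedSet hpack hx
    refine ⟨s, by simpa using hs, ?_⟩
    have : edist x s ≤ ε := hxs
    rw [edist_le_coe] at this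
    exact_mod_cast this

theorem IsPreconnected.exists_dist_le_two_mul_of_net (hK : IsPreconnected K) {ε : ℝ} {S : Finset X}
    (hSK : ↑S ⊆ K) (hnet : ∀ x ∈ K, ∃ s ∈ S, dist x s ≤ ε) {A : Finset X} (hA : A.Nonempty)
    (hAS : A ⊂ S) : ∃ a ∈ A, ∃ b ∈ S, b ∉ A ∧ dist a b ≤ 2 * ε := by
  classical
  obtain ⟨a₀, ha₀⟩ := hA
  obtain ⟨b₀, hb₀S, hb₀A⟩ := Finset.exists_of_ssubset hAS
  have hε : 0 ≤ ε := let ⟨_, _, h⟩ := hnet a₀ (hSK (hAS.subset ha₀)); dist_nonneg.trans h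
  let U := ⋃ a ∈ A, closedBall a ε
  let W := ⋃ b ∈ S \ A, closedBall b ε
  have hcover : K ⊆ U ∪ W := by
    intro x hx
    obtain ⟨s, hs, hxs⟩ := hnet x hx
    by_cases hsA : s ∈ A
    · exact Or.inl (mem_biUnion hsA hxs)
    · exact Or.inr (mem_biUnion (Finset.mem_sdiff.2 ⟨hs, hsA⟩) hxs)
  obtain ⟨z, -, hzU, hzW⟩ := isPreconnected_closed_iff.1 hK U W
    (A.finite_toSet.isClosed_biUnion fun _ _ => isClosed_closedBall)
    ((S \ A).finite_toSet.isClosed_biUnion fun _ _ => isClosed_closedBall) hcover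
    ⟨a₀, hSK (hAS.subset ha₀), mem_biUnion ha₀ (mem_closedBall_self hε)⟩
    ⟨b₀, hSK hb₀S, mem_biUnion (Finset.mem_sdiff.2 ⟨hb₀S, hb₀A⟩) (mem_closedBall_self hε)⟩
  obtain ⟨a, ha, hza⟩ := mem_iUnion₂.1 hzU
  obtain ⟨b, hb, hzb⟩ := mem_iUnion₂.1 hzW
  refine ⟨a, ha, b, (Finset.mem_sdiff.1 hb).1, (Finset.mem_sdiff.1 hb).2, ?_⟩
  linarith [dist_triangle_left a b z, mem_closedBall.1 hza, mem_closedBall.1 hzb]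

end Net

section Hausdorff

variable {X : Type*} [MetricSpace X] [MeasurableSpace X] [BorelSpace X] {K : Set X}

theorem IsPreconnected.ofReal_le_hausdorffMeasure_inter_closedBall (hK : IsPreconnected K)
    {x y : X} (hx : x ∈ K) (hy : y ∈ K) {r : ℝ} (hr : r ≤ dist x y) :
    ENNReal.ofReal r ≤ μH[1] (K ∩ closedBall x r) := by
  have hdist : LipschitzWith 1 (dist x) := LipschitzWith.dist_right x
  have hIcc : Icc 0 r ⊆ dist x '' (K ∩ closedBall x r) := by
    intro t ht
    obtain ⟨z, hz, rfl⟩ := (hK.image _ hdist.continuous.continuousOn).Icc_subset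
      ⟨x, hx, dist_self x⟩ ⟨y, hy, rfl⟩ ⟨ht.1, ht.2.trans hr⟩
    exact ⟨z, ⟨hz, by rw [mem_closedBall, dist_comm]; exact ht.2⟩, rfl⟩
  calc ENNReal.ofReal r = μH[1] (Icc 0 r) := by simp [hausdorffMeasure_real]
    _ ≤ μH[1] (dist x '' (K ∩ closedBall x r)) := measure_mono hIcc
    _ ≤ μH[1] (K ∩ closedBall x r) := by
        simpa using hdist.hausdorffMeasure_image_le zero_le_one (K ∩ closedBall x r)

theorem IsPreconnected.card_mul_le_hausdorffMeasure (hK : IsPreconnected K)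
    (hKm : MeasurableSet K) {S : Finset X} (hSK : ↑S ⊆ K) {ε : ℝ}
    (hS : (S : Set X).Pairwise (ε < dist · ·)) (hcard : 1 < S.card) :
    S.card * ENNReal.ofReal (ε / 2) ≤ μH[1] K := by
  have hdisj : (S : Set X).PairwiseDisjoint fun s => K ∩ closedBall s (ε / 2) := by
    intro a ha b hb hab
    refine disjoint_left.2 fun z hza hzb => ?_
    linarith [(hS ha hb hab : ε < dist a b), dist_triangle_left a b z, mem_closedBall.1 hza.2,
      mem_closedBall.1 hzb.2]
  calc S.card * ENNReal.ofReal (ε / 2) = ∑ s ∈ S, ENNReal.ofReal (ε / 2) := by simp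
    _ ≤ ∑ s ∈ S, μH[1] (K ∩ closedBall s (ε / 2)) := by
        refine Finset.sum_le_sum fun s hs => ?_
        obtain ⟨t, ht, hts⟩ := Finset.exists_mem_ne hcard s
        refine hK.ofReal_le_hausdorffMeasure_inter_closedBall (hSK hs) (hSK ht) ?_
        linarith [(hS hs ht hts.symm : ε < dist s t), dist_nonneg (x := s) (y := t)]
    _ = μH[1] (⋃ s ∈ S, K ∩ closedBall s (ε / 2)) :=
        (measure_biUnion_finset hdisj fun _ _ => hKm.inter measurableSet_closedBall).symm
    _ ≤ μH[1] K := measure_mono (iUnion₂_subset fun _ _ => inter_subset_left)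

theorem IsPreconnected.card_sub_one_mul_le_toReal_hausdorffMeasure (hK : IsPreconnected K)
    (hKm : MeasurableSet K) (hfin : μH[1] K ≠ ∞) {S : Finset X} (hSK : ↑S ⊆ K) {ε : ℝ}
    (hε : 0 ≤ ε) (hS : (S : Set X).Pairwise (ε < dist · ·)) :
    ((S.card : ℝ) - 1) * ε ≤ 2 * (μH[1] K).toReal := by
  rcases le_or_gt S.card 1 with hcard | hcard
  · have : (S.card : ℝ) ≤ 1 := by exact_mod_cast hcard
    nlinarith [ENNReal.toReal_nonneg (a := μH[1] K)]
  · have := ENNReal.toReal_mono hfin (hK.card_mul_le_hausdorffMeasure hKm hSK hS hcard)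
    rw [ENNReal.toReal_mul, ENNReal.toReal_natCast, ENNReal.toReal_ofReal (by positivity)] at this
    nlinarith

end Hausdorff

theorem exists_lipschitzWith_Icc_approx {V P : Type*} [NormedAddCommGroup V] [NormedSpace ℝ V]
    [MetricSpace P] [NormedAddTorsor V P] [MeasurableSpace P] [BorelSpace P] {K : Set P}
    (hK : IsCompact K) (hconn : IsConnected K) (hfin : μH[1] K ≠ ∞) {ε : ℝ} (hε : 0 < ε) :
    ∃ g : Icc 0 (μH[1] K).toReal → P, LipschitzWith 8 g ∧
      (∀ t, ∃ y ∈ K, dist (g t) y ≤ 2 * ε) ∧ ∀ y ∈ K, ∃ t, dist y (g t) ≤ ε := by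
  set L := (μH[1] K).toReal
  obtain ⟨S, hSK, hSsep, hSnet⟩ := hK.exists_separated_finset_net hε
  have hSne : S.Nonempty :=
    let ⟨x, hx⟩ := hconn.nonempty
    let ⟨s, hs, _⟩ := hSnet x hx
    ⟨s, hs⟩
  have hcount := hconn.isPreconnected.card_sub_one_mul_le_toReal_hausdorffMeasure
    hK.measurableSet hfin hSK hε.le hSsep
  obtain ⟨p, hp, hpS, hSp⟩ := S.exists_walk_visiting_all (R := fun a b => dist a b ≤ 2 * ε)
    (fun a b h => by rwa [dist_comm]) (fun a => by simp only [dist_self]; positivity) hSne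
    fun A hA hAS => hconn.isPreconnected.exists_dist_le_two_mul_of_net hSK hSnet hA hAS
  -- each step of the walk takes time `ε / 4`, so by `hcount` the walk fits into `[0, L]`
  let g : Icc 0 L → P := fun t => piecewiseLinear p (4 / ε * t)
  have ht : ∀ t : Icc 0 L, 0 ≤ 4 / ε * t := fun t => by have := t.2.1; positivity
  refine ⟨g, ?_, fun t => ⟨p ⌊4 / ε * t⌋₊, hSK (hpS _), ?_⟩, fun y hy => ?_⟩
  · refine LipschitzWith.of_dist_le_mul fun s t => ?_
    calc dist (g s) (g t) ≤ 2 * ε * dist (4 / ε * s) (4 / ε * t) :=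
          (lipschitzOnWith_piecewiseLinear (d := ⟨2 * ε, by positivity⟩) hp).dist_le_mul _ (ht s)
            _ (ht t)
      _ = 8 * dist s t := by
          rw [Subtype.dist_eq, Real.dist_eq, Real.dist_eq, ← mul_sub, abs_mul,
            abs_of_pos (by positivity : 0 < 4 / ε)]
          field_simp
          ring
  · exact dist_piecewiseLinear_floor_le (d := ⟨2 * ε, by positivity⟩) hp (ht t)
  · obtain ⟨s, hs, hys⟩ := hSnet y hy
    obtain ⟨n, hn, rfl⟩ := hSp s hs
    have hnL : n * ε / 4 ≤ L := by
      have : (n : ℝ) + 2 ≤ 2 * S.card := by exact_mod_cast hn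
      nlinarith
    refine ⟨⟨n * ε / 4, by positivity, hnL⟩, ?_⟩
    have : 4 / ε * (n * ε / 4) = n := by field_simp
    simpa [g, this] using hys

theorem exists_lipschitzWith_range_eq_of_forall_approx {X Y : Type*} [PseudoMetricSpace X]
    [CompactSpace X] [MetricSpace Y] [ProperSpace Y] {K : Set Y} (hK : IsCompact K) {C : ℝ≥0}
    (happrox : ∀ ε > 0, ∃ g : X → Y, LipschitzWith C g ∧
      (∀ x, ∃ y ∈ K, dist (g x) y ≤ ε) ∧ ∀ y ∈ K, ∃ x, dist y (g x) ≤ ε) :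
    ∃ f : X → Y, LipschitzWith C f ∧ range f = K := by
  choose g hgC hgK hKg using fun n : ℕ => happrox (1 / (n + 1)) Nat.one_div_pos_of_nat
  have hle_one : ∀ n : ℕ, 1 / ((n : ℝ) + 1) ≤ 1 := fun n =>
    div_le_one_of_le₀ (by linarith [n.cast_nonneg (α := ℝ)]) (by positivity)
  let G : ℕ → BoundedContinuousFunction X Y := fun n => .mkOfCompact ⟨g n, (hgC n).continuous⟩
  have hGK : ∀ n x, G n x ∈ cthickening 1 K := fun n x =>
    let ⟨y, hy, hxy⟩ := hgK n x
    mem_cthickening_of_dist_le _ y _ _ hy (hxy.trans (hle_one n))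
  have hcpt : IsCompact (closure (range G)) :=
    BoundedContinuousFunction.arzela_ascoli _ hK.cthickening _
      (by rintro _ x ⟨n, rfl⟩; exact hGK n x)
      (LipschitzWith.uniformEquicontinuous _ C fun ⟨_, n, hn⟩ => hn ▸ hgC n).equicontinuous
  obtain ⟨f, -, φ, hφ, hlim⟩ := hcpt.tendsto_subseq fun n => subset_closure (mem_range_self n)
  have hunif : ∀ δ > 0, ∀ᶠ n in atTop,
      1 / ((φ n : ℝ) + 1) < δ ∧ ∀ x, dist (f x) (g (φ n) x) < δ := by
    intro δ hδ
    filter_upwards [(tendsto_one_div_add_atTop_nhds_zero_nat.comp hφ.tendsto_atTop).eventually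
      (gt_mem_nhds hδ), Metric.tendsto_nhds.1 hlim δ hδ] with n hn hGf
    exact ⟨hn, fun x =>
      (BoundedContinuousFunction.dist_coe_le_dist x).trans_lt (by rwa [dist_comm])⟩
  refine ⟨f, ?_, Subset.antisymm ?_ fun y hy => ?_⟩
  · have hpt : Tendsto (fun n => g (φ n)) atTop (𝓝 f) :=
      tendsto_pi_nhds.2 fun x => Metric.tendsto_nhds.2 fun δ hδ =>
        (hunif δ hδ).mono fun n hn => by rw [dist_comm]; exact hn.2 x
    exact (isClosed_setOfPred_lipschitzWith C).mem_of_tendsto hpt (.of_forall fun n => hgC (φ n))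
  · rintro _ ⟨x, rfl⟩
    rw [← hK.isClosed.closure_eq, Metric.mem_closure_iff]
    intro δ hδ
    obtain ⟨n, hn, hfg⟩ := (hunif (δ / 2) (half_pos hδ)).exists
    obtain ⟨y, hy, hxy⟩ := hgK (φ n) x
    exact ⟨y, hy, by linarith [dist_triangle (f x) (g (φ n) x) y, hfg x]⟩
  · rw [← (isCompact_range f.continuous).isClosed.closure_eq, Metric.mem_closure_iff]
    intro δ hδ
    obtain ⟨n, hn, hfg⟩ := (hunif (δ / 2) (half_pos hδ)).exists
    obtain ⟨x, hx⟩ := hKg (φ n) y hy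
    exact ⟨f x, mem_range_self x,
      by linarith [dist_triangle y (g (φ n) x) (f x), hfg x, dist_comm (f x) (g (φ n) x)]⟩

/-- A compact connected set `K ⊂ ℝ²` with `L := H¹(K) < ∞` admits a Lipschitz
surjective parametrization `f : [0,L] → K`; in particular `K` is arcwise connected. -/
theorem stmt_2 (K : Set (EuclideanSpace ℝ (Fin 2)))
    (hK : IsCompact K) (hconn : IsConnected K) (hfin : μH[1] K < ⊤) :
    (∃ (C : ℝ≥0) (f : ℝ → EuclideanSpace ℝ (Fin 2)),
        LipschitzOnWith C f (Icc 0 (μH[1] K).toReal) ∧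
        f '' Icc 0 (μH[1] K).toReal = K) ∧
      IsPathConnected K := by
  have hL : 0 ≤ (μH[1] K).toReal := ENNReal.toReal_nonneg
  obtain ⟨f, hf, hfK⟩ := exists_lipschitzWith_range_eq_of_forall_approx hK fun ε hε => by
    obtain ⟨g, hg, hgK, hKg⟩ := exists_lipschitzWith_Icc_approx hK hconn hfin.ne (half_pos hε)
    refine ⟨g, hg, fun t => ?_, fun y hy => ?_⟩
    · simpa [mul_div_cancel₀] using hgK t
    · obtain ⟨t, ht⟩ := hKg y hy
      exact ⟨t, ht.trans (half_le_self hε.le)⟩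
  have hF : LipschitzWith 8 (f ∘ projIcc 0 _ hL) := by
    simpa using hf.comp (LipschitzWith.projIcc hL)
  have himage : (f ∘ projIcc 0 _ hL) '' Icc 0 (μH[1] K).toReal = K := by
    rw [image_comp, (projIcc_surjOn hL).image_eq_of_mapsTo (mapsTo_univ _ _), image_univ, hfK]
  refine ⟨⟨8, _, hF.lipschitzOnWith, himage⟩, himage ▸ ?_⟩
  exact ((convex_Icc _ _).isPathConnected ⟨0, left_mem_Icc.2 hL⟩).image'
    hF.continuous.continuousOn
end

section
/- Let A ⊂ ℝ² be compact. For any 0 ≤ L < H¹(A) there exists r₀ > 0 such that for every r < r₀ there exist finitely many points x₁,…,x_N ∈ A with: (i) the balls B(x_i, r/2) are pairwise disjoint; (ii) A ⊂ ∪ᵢ B(x_i, r); (iii) L < 2Nr. -/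
/-!
A maximal `r`-separated subset of `A` is finite (by total boundedness) and its `r`-balls cover
`A`, while the `r/2`-balls around its points are disjoint. The `r`-balls form a cover of `A` by
`N` sets of diameter at most `2r`; since `H¹(A)` is the limit of the infima of such sums as the
mesh tends to `0`, any `L < H¹(A)` is below `2Nr` once `r` is small enough.
-/

open MeasureTheory Metric Set Filter Topology
open scoped ENNReal NNReal

namespace Metric

variable {X : Type*} [PseudoMetricSpace X] {A N : Set X} {r : ℝ}

lemma ediam_ball_le (x : X) (hr : 0 ≤ r) : ediam (ball x r) ≤ ENNReal.ofReal (2 * r) :=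
  ediam_le_of_forall_dist_le fun _ ha _ hb ↦ (dist_le_diam_of_mem isBounded_ball ha hb).trans
    (diam_ball hr)

lemma exists_maximal_pairwise_le_dist (A : Set X) (r : ℝ) :
    ∃ N, Maximal (fun N ↦ N ⊆ A ∧ N.Pairwise (r ≤ dist · ·)) N :=
  zorn_subset _ fun c hcS hc ↦
    ⟨⋃₀ c, ⟨sUnion_subset fun _ hs ↦ (hcS hs).1, hc.pairwise_sUnion.2 fun _ hs ↦ (hcS hs).2⟩,
      fun _ hs ↦ subset_sUnion_of_mem hs⟩

lemma exists_dist_lt_of_maximal_pairwise_le_dist (hr : 0 < r)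
    (hN : Maximal (fun N ↦ N ⊆ A ∧ N.Pairwise (r ≤ dist · ·)) N) {a : X} (ha : a ∈ A) :
    ∃ y ∈ N, dist a y < r := by
  by_contra! h
  have hins : insert a N ⊆ N :=
    hN.2 ⟨insert_subset ha hN.1.1, hN.1.2.insert fun y hy _ ↦ ⟨h y hy, dist_comm a y ▸ h y hy⟩⟩
      (subset_insert a N)
  exact (h a (hins (mem_insert a N))).not_gt (by simpa using hr)

lemma _root_.TotallyBounded.finite_of_pairwise_le_dist (hA : TotallyBounded A) (hr : 0 < r)
    (hNA : N ⊆ A) (hN : N.Pairwise (r ≤ dist · ·)) : N.Finite := by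
  obtain ⟨u, hu, hAu⟩ := totallyBounded_iff.1 hA (r / 2) (half_pos hr)
  -- two points of `N` in one ball of radius `r / 2` would be closer than `r`
  have hsub : ∀ c, (N ∩ ball c (r / 2)).Subsingleton := fun c x hx y hy ↦ by
    by_contra hxy
    have := dist_triangle_right x y c
    linarith [hN hx.1 hy.1 hxy, mem_ball.1 hx.2, mem_ball.1 hy.2]
  refine (hu.biUnion fun c _ ↦ (hsub c).finite).subset fun x hx ↦ ?_
  obtain ⟨c, hc, hxc⟩ := mem_iUnion₂.1 (hAu (hNA hx))
  exact mem_iUnion₂.2 ⟨c, hc, hx, hxc⟩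

lemma _root_.TotallyBounded.exists_separated_cover (hA : TotallyBounded A) (hr : 0 < r) :
    ∃ (n : ℕ) (x : Fin n → X), (∀ i, x i ∈ A) ∧ Pairwise (fun i j ↦ r ≤ dist (x i) (x j)) ∧
      A ⊆ ⋃ i, ball (x i) r := by
  obtain ⟨N, hN⟩ := exists_maximal_pairwise_le_dist A r
  obtain ⟨n, x, rfl⟩ := (hA.finite_of_pairwise_le_dist hr hN.1.1 hN.1.2).fin_embedding
  refine ⟨n, x, fun i ↦ hN.1.1 (mem_range_self i),
    fun i j hij ↦ hN.1.2 (mem_range_self i) (mem_range_self j) (x.injective.ne hij),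
    fun a ha ↦ ?_⟩
  obtain ⟨_, ⟨i, rfl⟩, hai⟩ := exists_dist_lt_of_maximal_pairwise_le_dist hr hN ha
  exact mem_iUnion.2 ⟨i, hai⟩

end Metric

namespace MeasureTheory.Measure

variable {X : Type*} [EMetricSpace X] [MeasurableSpace X] [BorelSpace X]

lemma exists_pos_lt_card_mul_rpow_of_lt_hausdorffMeasure {d : ℝ} (hd : 0 ≤ d) {A : Set X}
    {L : ℝ≥0∞} (hL : L < μH[d] A) :
    ∃ ε > (0 : ℝ), ∀ δ : ℝ, 0 < δ → δ < ε → ∀ (n : ℕ) (t : Fin n → Set X),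
      A ⊆ ⋃ i, t i → (∀ i, ediam (t i) ≤ ENNReal.ofReal δ) → L < n * ENNReal.ofReal δ ^ d := by
  -- the liminf is taken over all finite covers, as the bound on their diameters tends to `0`
  let Cover := {p : ℝ × Σ n, Fin n → Set X //
    A ⊆ ⋃ i, p.2.2 i ∧ ∀ i, ediam (p.2.2 i) ≤ ENNReal.ofReal p.1}
  let l : Filter Cover := Filter.comap (fun p ↦ p.1.1) (𝓝[>] 0)
  have hδ : Tendsto (fun p : Cover ↦ ENNReal.ofReal p.1.1) l (𝓝 0) := by
    have : Tendsto ENNReal.ofReal (𝓝[>] 0) (𝓝 0) := by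
      simpa using (ENNReal.continuous_ofReal.tendsto 0).mono_left nhdsWithin_le_nhds
    exact this.comp tendsto_comap
  have hle := hausdorffMeasure_le_liminf_sum d A _ hδ (fun p : Cover ↦ p.1.2.2)
    (.of_forall fun p ↦ p.2.2) (.of_forall fun p ↦ p.2.1)
  have hev : ∀ᶠ p in l, L < ∑ i, ediam (p.1.2.2 i) ^ d :=
    eventually_lt_of_lt_liminf (hL.trans_le hle)
  obtain ⟨ε, hε, hεL⟩ := (nhdsGT_basis (0 : ℝ)).eventually_iff.1 (eventually_comap.1 hev)
  refine ⟨ε, hε, fun δ hδ hδε n t hAt ht ↦ ?_⟩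
  calc L < ∑ i, ediam (t i) ^ d := hεL ⟨hδ, hδε⟩ ⟨(δ, ⟨n, t⟩), hAt, ht⟩ rfl
    _ ≤ ∑ _i : Fin n, ENNReal.ofReal δ ^ d := by gcongr with i; exact ht i
    _ = n * ENNReal.ofReal δ ^ d := by simp

end MeasureTheory.Measure

theorem stmt_3_general (A : Set (EuclideanSpace ℝ (Fin 2))) (hA : IsCompact A)
    (L : ℝ) (hLA : ENNReal.ofReal L < μH[1] A) :
    ∃ r₀ > (0:ℝ), ∀ r : ℝ, 0 < r → r < r₀ →
      ∃ (N : ℕ) (x : Fin N → EuclideanSpace ℝ (Fin 2)),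
        (∀ i, x i ∈ A) ∧
        (∀ i j, i ≠ j → Disjoint (ball (x i) (r / 2)) (ball (x j) (r / 2))) ∧
        A ⊆ ⋃ i, ball (x i) r ∧
        L < 2 * N * r := by
  obtain ⟨ε, hε, hεL⟩ :=
    Measure.exists_pos_lt_card_mul_rpow_of_lt_hausdorffMeasure zero_le_one hLA
  refine ⟨ε / 2, half_pos hε, fun r hr hrε ↦ ?_⟩
  obtain ⟨N, x, hxA, hsep, hAx⟩ := hA.totallyBounded.exists_separated_cover hr
  refine ⟨N, x, hxA, fun i j hij ↦ ball_disjoint_ball (by linarith [hsep hij]), hAx, ?_⟩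
  have hlt := hεL (2 * r) (by positivity) (by linarith) N (fun i ↦ ball (x i) r) hAx
    fun i ↦ ediam_ball_le (x i) hr.le
  rw [ENNReal.rpow_one, ← ENNReal.ofReal_natCast, ← ENNReal.ofReal_mul N.cast_nonneg,
    ENNReal.ofReal_lt_ofReal_iff'] at hlt
  linarith [hlt.1]

/-- Covering lemma: for compact `A ⊂ ℝ²` and `0 ≤ L < H¹(A)` there is `r₀ > 0`
such that every `r < r₀` admits finitely many centers `x_i ∈ A` with disjoint balls of radius
`r/2`, covering `A` by balls of radius `r`, and `L < 2Nr`. -/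
theorem stmt_3 (A : Set (EuclideanSpace ℝ (Fin 2))) (hA : IsCompact A)
    (L : ℝ) (hL : 0 ≤ L) (hLA : ENNReal.ofReal L < μH[1] A) :
    ∃ r₀ > (0:ℝ), ∀ r : ℝ, 0 < r → r < r₀ →
      ∃ (N : ℕ) (x : Fin N → EuclideanSpace ℝ (Fin 2)),
        (∀ i, x i ∈ A) ∧
        (∀ i j, i ≠ j → Disjoint (ball (x i) (r / 2)) (ball (x j) (r / 2))) ∧
        A ⊆ ⋃ i, ball (x i) r ∧
        L < 2 * N * r :=
  stmt_3_general A hA L hLA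
end

section
/- Let A ⊂ ℝ² be compact and connected, x ∈ A, and 0 < r < diam(A)/2. Then the connected component of A ∩ closedBall(x,r) containing x meets the sphere ∂B(x,r), i.e., contains a point y with |y − x| = r. -/
open MeasureTheory Metric Set Filter Topology
open scoped ENNReal NNReal

lemma exists_clopen_disjoint {X : Type*} [TopologicalSpace X] [T2Space X] [CompactSpace X]
    (x : X) (S : Set X) (hS : IsClosed S) (hd : Disjoint (connectedComponent x) S) :
    ∃ Z : Set X, IsClopen Z ∧ x ∈ Z ∧ Disjoint Z S := by
  rw [connectedComponent_eq_iInter_isClopen, disjoint_comm, Set.disjoint_iff_inter_eq_empty] at hd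
  obtain ⟨t, ht⟩ := hS.isCompact.elim_finite_subfamily_closed
    (fun s : { s : Set X // IsClopen s ∧ x ∈ s } => s) (fun s => s.2.1.1) hd
  refine ⟨⋂ i ∈ t, (i : Set X), isClopen_biInter_finset fun i _ => i.2.1,
    Set.mem_iInter₂.2 fun i _ => i.2.2, ?_⟩
  rw [disjoint_comm, Set.disjoint_iff_inter_eq_empty]
  exact ht

/-- For a compact connected `A ⊂ ℝ²`, `x ∈ A` and `0 < r < diam A / 2`, the
connected component of `A ∩ closedBall x r` containing `x` meets the sphere `∂B(x,r)`. -/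
theorem stmt_5 (A : Set (EuclideanSpace ℝ (Fin 2))) (hA : IsCompact A)
    (hconn : IsConnected A) (x : EuclideanSpace ℝ (Fin 2)) (hx : x ∈ A)
    (r : ℝ) (hr : 0 < r) (hr2 : r < Metric.diam A / 2) :
    ∃ y ∈ connectedComponentIn (A ∩ closedBall x r) x, dist y x = r := by
  by_contra hcon
  push_neg at hcon
  set K : Set (EuclideanSpace ℝ (Fin 2)) := A ∩ closedBall x r with hK
  have hKc : IsCompact K := hA.inter_right Metric.isClosed_closedBall
  have hxK : x ∈ K := ⟨hx, Metric.mem_closedBall.2 (by simp [hr.le])⟩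
  haveI : CompactSpace K := isCompact_iff_compactSpace.1 hKc
  set x' : K := ⟨x, hxK⟩
  set S : Set K := {z : K | dist (z : EuclideanSpace ℝ (Fin 2)) x = r} with hS
  have hSclosed : IsClosed S :=
    isClosed_eq (continuous_subtype_val.dist continuous_const) continuous_const
  have hdisj : Disjoint (connectedComponent x') S := by
    rw [Set.disjoint_left]
    rintro z hz hzS
    refine hcon (z : EuclideanSpace ℝ (Fin 2)) ?_ hzS
    rw [connectedComponentIn_eq_image hxK]
    exact ⟨z, hz, rfl⟩
  obtain ⟨Z, hZclopen, hxZ, hZS⟩ := exists_clopen_disjoint x' S hSclosed hdisj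
  set V : Set (EuclideanSpace ℝ (Fin 2)) := Subtype.val '' Z with hV
  -- V is closed
  have hVcompact : IsCompact V := (hZclopen.1.isCompact).image continuous_subtype_val
  have hVclosed : IsClosed V := hVcompact.isClosed
  -- every point of V is in the open ball
  have hVball : V ⊆ ball x r := by
    rintro y ⟨z, hzZ, rfl⟩
    have h1 : dist (z : EuclideanSpace ℝ (Fin 2)) x ≤ r := Metric.mem_closedBall.1 z.2.2
    have h2 : dist (z : EuclideanSpace ℝ (Fin 2)) x ≠ r := fun h =>
      Set.disjoint_left.1 hZS hzZ h
    exact Metric.mem_ball.2 (lt_of_le_of_ne h1 h2)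
  -- V is open in A
  obtain ⟨U, hUopen, hZU⟩ := isOpen_induced_iff.1 hZclopen.2
  have hVeq : V = A ∩ (U ∩ ball x r) := by
    apply Set.Subset.antisymm
    · rintro y ⟨z, hzZ, rfl⟩
      refine ⟨z.2.1, ?_, hVball ⟨z, hzZ, rfl⟩⟩
      have : z ∈ Subtype.val ⁻¹' U := hZU ▸ hzZ
      exact this
    · rintro y ⟨hyA, hyU, hyball⟩
      have hyK : y ∈ K := ⟨hyA, Metric.ball_subset_closedBall hyball⟩
      refine ⟨⟨y, hyK⟩, ?_, rfl⟩
      have : (⟨y, hyK⟩ : K) ∈ Subtype.val ⁻¹' U := hyU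
      rw [← hZU]; exact this
  -- A splits into V and A \ V, both closed
  have hAVclosed : IsClosed (A \ V) := by
    have : A \ V = A ∩ (U ∩ ball x r)ᶜ := by
      rw [hVeq]; ext y; simp only [Set.mem_diff, Set.mem_inter_iff, Set.mem_compl_iff]; tauto
    rw [this]
    exact hA.isClosed.inter (hUopen.inter isOpen_ball).isClosed_compl
  have hcover : A ⊆ V ∪ (A \ V) := fun y hy => by
    by_cases h : y ∈ V
    · exact Or.inl h
    · exact Or.inr ⟨hy, h⟩
  have hdisj2 : Disjoint V (A \ V) := Set.disjoint_left.2 fun y hy hy2 => hy2.2 hy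
  have := (isPreconnected_iff_subset_of_fully_disjoint_closed hA.isClosed).1
    hconn.isPreconnected V (A \ V) hVclosed hAVclosed hcover hdisj2
  have hAV : A ⊆ V := by
    rcases this with h | h
    · exact h
    · exact absurd (h hx) (fun h2 => h2.2 ⟨x', hxZ, rfl⟩)
  -- diameter contradiction
  have hdiam : Metric.diam A ≤ 2 * r := by
    calc Metric.diam A ≤ Metric.diam (closedBall x r) :=
          Metric.diam_mono (fun y hy => Metric.ball_subset_closedBall (hVball (hAV hy)))
            isBounded_closedBall
      _ ≤ 2 * r := Metric.diam_closedBall hr.le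
  linarith
end

section
/- Let E ⊂ ℝ² be a connected set containing two points a and b, let λ > 0, and define I_λ(E) := (1/(2λπ)) ∫_{S¹} ℒ²(E_{λ,ν}) dH¹(ν), where E_{λ,ν} = {x + tν : |t| ≤ λ, x ∈ E}. Then I_λ(E) ≥ (2/π)|a − b|. -/
open MeasureTheory Metric Set Filter Topology
open scoped ENNReal NNReal

/-- The `λ`-enlargement of `A` in the direction `ν`: `A_{λ,ν} = {a + tν : |t| ≤ λ, a ∈ A}`. -/
def enlarge (A : Set (EuclideanSpace ℝ (Fin 2))) (lam : ℝ) (ν : EuclideanSpace ℝ (Fin 2)) :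
    Set (EuclideanSpace ℝ (Fin 2)) :=
  {p | ∃ a ∈ A, ∃ t : ℝ, |t| ≤ lam ∧ p = a + t • ν}

/-- The averaged directional enlargement quantity
`I_λ(A) = (1/(2λπ)) ∫_{S¹} ℒ²(A_{λ,ν}) dH¹(ν)`. -/
noncomputable def Ilam (lam : ℝ) (A : Set (EuclideanSpace ℝ (Fin 2))) : ℝ≥0∞ :=
  ENNReal.ofReal (1 / (2 * lam * Real.pi)) *
    ∫⁻ ν in sphere (0 : EuclideanSpace ℝ (Fin 2)) 1, volume (enlarge A lam ν) ∂(μH[1])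

/-! For a unit direction `ν` with normal `ν'`, the projection of `E` onto `ℝν'` contains that of
the segment `[a, b]`, an interval of length `|⟪b - a, ν'⟫|`, and above each of its points
`E_{λ,ν}` contains a segment of length `2λ` in direction `ν`. Fubini, applied to a measurable hull,
gives `ℒ²(E_{λ,ν}) ≥ 2λ |⟪b - a, ν'⟫|`. Integrating over `S¹` it remains to see
`∫_{S¹} |⟪u, ν⟫| dH¹(ν) ≥ 2‖u‖`: the two arcs where `|⟪u, ν⟫| ≥ ‖u‖ / √2` have length at least
`√2` each, because they project 1-Lipschitzly onto intervals of that length. -/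

open scoped RealInnerProductSpace

section Sphere

variable {F : Type*} [NormedAddCommGroup F] [InnerProductSpace ℝ F]

theorem norm_smul_add_smul_sq_of_orthonormal {w w' : F} (hw : ‖w‖ = 1) (hw' : ‖w'‖ = 1)
    (h : ⟪w, w'⟫ = 0) (x y : ℝ) : ‖x • w + y • w'‖ ^ 2 = x ^ 2 + y ^ 2 := by
  rw [norm_add_sq_real, real_inner_smul_left, real_inner_smul_right, h, norm_smul, norm_smul,
    hw, hw', Real.norm_eq_abs, Real.norm_eq_abs]
  simp

variable [MeasurableSpace F] [BorelSpace F]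

theorem ofReal_two_mul_le_hausdorffMeasure_sphere_cap {w w' : F} (hw : ‖w‖ = 1) (hw' : ‖w'‖ = 1)
    (h : ⟪w, w'⟫ = 0) {s c : ℝ} (hsc : s ^ 2 + c ^ 2 ≤ 1) :
    ENNReal.ofReal (2 * c) ≤ μH[1] {ν ∈ sphere (0 : F) 1 | s ≤ ⟪w, ν⟫} := by
  set f : F → ℝ := fun ν => ⟪w', ν⟫
  have hf : LipschitzWith 1 f := by
    have hnorm : ‖innerSL ℝ w'‖₊ = 1 := NNReal.eq (by simp [innerSL_apply_norm, hw'])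
    simpa [hnorm] using (innerSL ℝ w').lipschitz
  -- The cap projects onto its chord: `y ↦ √(1 - y²) w + y w'` is a section over `[-c, c]`.
  have hcover : Icc (-c) c ⊆ f '' {ν ∈ sphere (0 : F) 1 | s ≤ ⟪w, ν⟫} := by
    intro y hy
    have hyc : y ^ 2 ≤ c ^ 2 := sq_le_sq' hy.1 hy.2
    refine ⟨√(1 - y ^ 2) • w + y • w', ⟨?_, ?_⟩, ?_⟩
    · rw [mem_sphere_zero_iff_norm, ← pow_eq_one_iff_of_nonneg (norm_nonneg _) two_ne_zero,
        norm_smul_add_smul_sq_of_orthonormal hw hw' h, Real.sq_sqrt (by nlinarith)]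
      ring
    · simp only [inner_add_right, real_inner_smul_right, real_inner_self_eq_norm_sq, hw, h]
      simpa using (le_abs_self s).trans (Real.abs_le_sqrt (by linarith))
    · simp only [f, inner_add_right, real_inner_smul_right, real_inner_self_eq_norm_sq, hw',
        real_inner_comm w w', h]
      ring
  calc ENNReal.ofReal (2 * c) = volume (Icc (-c) c) := by rw [Real.volume_Icc]; ring_nf
    _ ≤ μH[1] (f '' {ν ∈ sphere (0 : F) 1 | s ≤ ⟪w, ν⟫}) := by
      rw [hausdorffMeasure_real]; exact measure_mono hcover
    _ ≤ μH[1] {ν ∈ sphere (0 : F) 1 | s ≤ ⟪w, ν⟫} := by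
      simpa using hf.hausdorffMeasure_image_le zero_le_one _

-- The exact value is `4 ‖u‖`.
theorem ofReal_two_mul_norm_le_lintegral_abs_inner_sphere [Fact (Module.finrank ℝ F = 2)]
    (o : Orientation ℝ F (Fin 2)) (u : F) :
    ENNReal.ofReal (2 * ‖u‖) ≤ ∫⁻ ν in sphere (0 : F) 1, ENNReal.ofReal |⟪u, ν⟫| ∂μH[1] := by
  rcases eq_or_ne u 0 with rfl | hu
  · simp
  have hu' : 0 < ‖u‖ := norm_pos_iff.2 hu
  set w := ‖u‖⁻¹ • u
  have hw : ‖w‖ = 1 := by rw [norm_smul, norm_inv, norm_norm, inv_mul_cancel₀ hu'.ne']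
  have hinner : ∀ ν, ⟪u, ν⟫ = ‖u‖ * ⟪w, ν⟫ := fun ν => by
    rw [real_inner_smul_left, mul_inv_cancel_left₀ hu'.ne']
  set s : ℝ := √2 / 2
  have hs2 : s ^ 2 = 1 / 2 := by rw [div_pow, Real.sq_sqrt zero_le_two]; norm_num
  set cap : F → Set F := fun w => {ν ∈ sphere (0 : F) 1 | s ≤ ⟪w, ν⟫}
  have hcap_meas : ∀ w, MeasurableSet (cap w) := fun w =>
    isClosed_sphere.measurableSet.inter (measurableSet_le measurable_const (by fun_prop) :
      MeasurableSet {ν : F | s ≤ ⟪w, ν⟫})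
  have hcap_le : ∀ w, ‖w‖ = 1 → ENNReal.ofReal (2 * s) ≤ μH[1] (cap w) := fun w hw =>
    ofReal_two_mul_le_hausdorffMeasure_sphere_cap (w' := o.rightAngleRotation w) hw
      (by rw [LinearIsometryEquiv.norm_map, hw])
      (by rw [real_inner_comm, o.inner_rightAngleRotation_self]) (by linarith)
  have hdisj : Disjoint (cap w) (cap (-w)) := by
    rw [Set.disjoint_left]
    rintro ν ⟨-, h₁⟩ ⟨-, h₂⟩
    rw [inner_neg_left] at h₂
    linarith [show 0 < s by positivity]
  have hbound : ∀ ν ∈ cap w ∪ cap (-w), ENNReal.ofReal (‖u‖ * s) ≤ ENNReal.ofReal |⟪u, ν⟫| := by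
    rintro ν (⟨-, hν⟩ | ⟨-, hν⟩) <;> gcongr <;> rw [hinner, abs_mul, abs_of_pos hu'] <;> gcongr
    · exact hν.trans (le_abs_self _)
    · rw [inner_neg_left] at hν
      exact hν.trans (neg_le_abs _)
  calc ENNReal.ofReal (2 * ‖u‖)
      = ENNReal.ofReal (‖u‖ * s) * (ENNReal.ofReal (2 * s) + ENNReal.ofReal (2 * s)) := by
        rw [← ENNReal.ofReal_add (by positivity) (by positivity),
          ← ENNReal.ofReal_mul (by positivity)]
        congr 1
        linear_combination -4 * ‖u‖ * hs2
    _ ≤ ENNReal.ofReal (‖u‖ * s) * μH[1] (cap w ∪ cap (-w)) := by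
        rw [measure_union hdisj (hcap_meas _)]
        gcongr
        · exact hcap_le w hw
        · exact hcap_le (-w) (by rw [norm_neg, hw])
    _ = ∫⁻ _ in cap w ∪ cap (-w), ENNReal.ofReal (‖u‖ * s) ∂μH[1] := (setLIntegral_const _ _).symm
    _ ≤ ∫⁻ ν in cap w ∪ cap (-w), ENNReal.ofReal |⟪u, ν⟫| ∂μH[1] :=
        setLIntegral_mono' ((hcap_meas _).union (hcap_meas _)) hbound
    _ ≤ ∫⁻ ν in sphere (0 : F) 1, ENNReal.ofReal |⟪u, ν⟫| ∂μH[1] :=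
        lintegral_mono_set (union_subset (sep_subset _ _) (sep_subset _ _))

end Sphere

section Slices

variable {F : Type*} [NormedAddCommGroup F] [InnerProductSpace ℝ F] [FiniteDimensional ℝ F]
  [MeasurableSpace F] [BorelSpace F]

theorem OrthonormalBasis.measurePreserving_fst_smul_add_snd_smul
    (b : OrthonormalBasis (Fin 2) ℝ F) :
    MeasurePreserving (fun p : ℝ × ℝ => p.1 • b 0 + p.2 • b 1) := by
  have hcoord : (fun p : ℝ × ℝ => p.1 • b 0 + p.2 • b 1)
      = (b.repr.symm ∘ WithLp.toLp 2) ∘ MeasurableEquiv.finTwoArrow.symm := by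
    funext p
    rw [Function.comp_apply, Function.comp_apply, ← b.sum_repr_symm]
    simp [Fin.sum_univ_two]
  rw [hcoord]
  exact (b.measurePreserving_repr_symm.comp (PiLp.volume_preserving_toLp (Fin 2))).comp
    (volume_preserving_finTwoArrow ℝ).symm

theorem OrthonormalBasis.mul_volume_le_of_le_volume_slice (b : OrthonormalBasis (Fin 2) ℝ F)
    {S : Set F} {K : Set ℝ} (hK : MeasurableSet K) {m : ℝ≥0∞}
    (h : ∀ y ∈ K, m ≤ volume {x : ℝ | x • b 0 + y • b 1 ∈ S}) :
    m * volume K ≤ volume S := by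
  set G := toMeasurable volume S
  have hmp := b.measurePreserving_fst_smul_add_snd_smul
  calc m * volume K = ∫⁻ _ in K, m := (setLIntegral_const K m).symm
    _ ≤ ∫⁻ y in K, volume {x : ℝ | x • b 0 + y • b 1 ∈ G} :=
      setLIntegral_mono' hK fun y hy =>
        (h y hy).trans (measure_mono fun x hx => subset_toMeasurable _ _ hx)
    _ ≤ ∫⁻ y, volume {x : ℝ | x • b 0 + y • b 1 ∈ G} := setLIntegral_le_lintegral _ _
    _ = volume ((fun p : ℝ × ℝ => p.1 • b 0 + p.2 • b 1) ⁻¹' G) := by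
      rw [Measure.volume_eq_prod, Measure.prod_apply_symm]
      · rfl
      · exact (measurableSet_toMeasurable _ _).preimage hmp.measurable
    _ = volume S := by
      rw [hmp.measure_preimage (measurableSet_toMeasurable _ _).nullMeasurableSet,
        measure_toMeasurable]

end Slices

theorem ofReal_two_mul_mul_le_volume_enlarge {E : Set (EuclideanSpace ℝ (Fin 2))}
    (hE : IsPreconnected E) {a b : EuclideanSpace ℝ (Fin 2)} (ha : a ∈ E) (hb : b ∈ E) (lam : ℝ)
    {ν ν' : EuclideanSpace ℝ (Fin 2)} (hν : Orthonormal ℝ ![ν, ν']) :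
    ENNReal.ofReal (2 * lam) * ENNReal.ofReal |⟪b - a, ν'⟫| ≤ volume (enlarge E lam ν) := by
  set B := (basisOfOrthonormalOfCardEqFinrank hν (by simp)).toOrthonormalBasis (by simpa using hν)
  have hB0 : B 0 = ν := by simp [B]
  have hB1 : B 1 = ν' := by simp [B]
  have hproj : uIcc ⟪a, ν'⟫ ⟪b, ν'⟫ ⊆ (fun x => ⟪x, ν'⟫) '' E :=
    (hE.image _ (continuous_id.inner continuous_const).continuousOn).ordConnected.uIcc_subset
      (mem_image_of_mem _ ha) (mem_image_of_mem _ hb)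
  have hvolK : volume (uIcc ⟪a, ν'⟫ ⟪b, ν'⟫) = ENNReal.ofReal |⟪b - a, ν'⟫| := by
    rw [Real.volume_interval, inner_sub_left]
  rw [← hvolK]
  refine B.mul_volume_le_of_le_volume_slice measurableSet_uIcc fun y hy => ?_
  obtain ⟨x, hxE, rfl⟩ := hproj hy
  have hsegment : Icc (⟪x, ν⟫ - lam) (⟪x, ν⟫ + lam) ⊆
      {t : ℝ | t • B 0 + ⟪x, ν'⟫ • B 1 ∈ enlarge E lam ν} := by
    intro t ht
    refine ⟨x, hxE, t - ⟪x, ν⟫, abs_le.2 ⟨by linarith [ht.1], by linarith [ht.2]⟩, ?_⟩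
    have hx := B.sum_repr' x
    rw [Fin.sum_univ_two, hB0, hB1, real_inner_comm x ν, real_inner_comm x ν'] at hx
    rw [hB0, hB1]
    nth_rewrite 2 [← hx]
    module
  calc ENNReal.ofReal (2 * lam) = volume (Icc (⟪x, ν⟫ - lam) (⟪x, ν⟫ + lam)) := by
        rw [Real.volume_Icc]; ring_nf
    _ ≤ _ := measure_mono hsegment

/-- If `E ⊂ ℝ²` is connected and contains `a` and `b`, then
`I_λ(E) ≥ (2/π)|a − b|` for every `λ > 0`. -/
theorem stmt_8 (E : Set (EuclideanSpace ℝ (Fin 2))) (hE : IsConnected E)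
    (a b : EuclideanSpace ℝ (Fin 2)) (ha : a ∈ E) (hb : b ∈ E)
    (lam : ℝ) (hlam : 0 < lam) :
    ENNReal.ofReal ((2 / Real.pi) * dist a b) ≤ Ilam lam E := by
  have : Fact (Module.finrank ℝ (EuclideanSpace ℝ (Fin 2)) = 2) := ⟨finrank_euclideanSpace_fin⟩
  set o : Orientation ℝ (EuclideanSpace ℝ (Fin 2)) (Fin 2) :=
    (EuclideanSpace.basisFun (Fin 2) ℝ).toBasis.orientation
  set u := o.rightAngleRotation (b - a)
  have hslices : ∀ ν ∈ sphere (0 : EuclideanSpace ℝ (Fin 2)) 1,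
      ENNReal.ofReal (2 * lam) * ENNReal.ofReal |⟪u, ν⟫| ≤ volume (enlarge E lam ν) := by
    intro ν hν
    have hon : Orthonormal ℝ ![ν, o.rightAngleRotation ν] := by
      simp [mem_sphere_zero_iff_norm.1 hν]
    simpa [u, o.inner_rightAngleRotation_swap] using
      ofReal_two_mul_mul_le_volume_enlarge hE.isPreconnected ha hb lam hon
  have hu : ‖u‖ = dist a b := by rw [LinearIsometryEquiv.norm_map, dist_comm, dist_eq_norm]
  calc ENNReal.ofReal ((2 / Real.pi) * dist a b)
      = ENNReal.ofReal (1 / (2 * lam * Real.pi)) *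
          (ENNReal.ofReal (2 * lam) * ENNReal.ofReal (2 * ‖u‖)) := by
        rw [← ENNReal.ofReal_mul (by positivity), ← ENNReal.ofReal_mul (by positivity), hu]
        congr 1
        field_simp
    _ ≤ ENNReal.ofReal (1 / (2 * lam * Real.pi)) * (ENNReal.ofReal (2 * lam) *
          ∫⁻ ν in sphere (0 : EuclideanSpace ℝ (Fin 2)) 1, ENNReal.ofReal |⟪u, ν⟫| ∂μH[1]) := by
        gcongr
        exact ofReal_two_mul_norm_le_lintegral_abs_inner_sphere o u
    _ ≤ Ilam lam E := by
        rw [Ilam, ← lintegral_const_mul' _ _ ENNReal.ofReal_ne_top]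
        exact mul_le_mul_right (setLIntegral_mono' isClosed_sphere.measurableSet hslices) _
end

section
/- For a segment [a,b] ⊂ ℝ² and any λ > 0, with I_λ defined as I_λ(A) := (1/(2λπ)) ∫_{S¹} ℒ²(A_{λ,ν}) dH¹(ν), one has I_λ([a,b]) ≥ (2/π)|a − b|. -/
open MeasureTheory Metric Set Filter Topology
open scoped ENNReal NNReal

/-!
The enlargement of `[a, b]` in the direction `ν` contains a parallelogram of area
`2λ |ω (b - a) ν| = 2λ |⟪J (b - a), ν⟫|`, where `ω` is the area form and `J` the rotation by a
right angle, so it suffices that `∫_{S¹} |⟪w, ν⟫| dH¹ ≥ 2 ‖w‖`. For a unit vector `e`, each of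
the two caps of `S¹` on which `|⟪e, ν⟫| ≥ √2 / 2` is mapped onto a chord of length `√2` by the
1-Lipschitz projection onto the orthogonal direction, hence has length at least `√2`.
-/

open scoped RealInnerProductSpace Pointwise

section Parallelogram

variable {E : Type*} [NormedAddCommGroup E] [InnerProductSpace ℝ E] [MeasurableSpace E]
  [BorelSpace E] [FiniteDimensional ℝ E] [Fact (Module.finrank ℝ E = 2)]

theorem volume_parallelepiped_pair (o : Orientation ℝ E (Fin 2)) (x y : E) :
    volume (parallelepiped ![x, y]) = ENNReal.ofReal |o.areaForm x y| := by
  rw [← o.measure_eq_volume, AlternatingMap.measure_parallelepiped, o.areaForm_to_volumeForm]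

end Parallelogram

instance : Fact (Module.finrank ℝ (EuclideanSpace ℝ (Fin 2)) = 2) := ⟨finrank_euclideanSpace_fin⟩

theorem vadd_parallelepiped_subset_enlarge_segment (a b ν : EuclideanSpace ℝ (Fin 2)) {lam : ℝ}
    (hlam : 0 ≤ lam) :
    (a - lam • ν) +ᵥ parallelepiped ![b - a, (2 * lam) • ν] ⊆ enlarge (segment ℝ a b) lam ν := by
  rintro _ ⟨_, ⟨t, ht, rfl⟩, rfl⟩
  have h0 : t 0 ∈ Icc 0 1 := ⟨ht.1 0, ht.2 0⟩
  have h1 : t 1 ∈ Icc 0 1 := ⟨ht.1 1, ht.2 1⟩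
  refine ⟨a + t 0 • (b - a), segment_eq_image' ℝ a b ▸ ⟨t 0, h0, rfl⟩, (2 * t 1 - 1) * lam,
    ?_, ?_⟩
  · rw [abs_mul, abs_of_nonneg hlam]
    exact mul_le_of_le_one_left hlam (abs_le.2 ⟨by linarith [h1.1], by linarith [h1.2]⟩)
  · simp only [Fin.sum_univ_two, Matrix.cons_val_zero, Matrix.cons_val_one, vadd_eq_add]
    module

theorem volume_enlarge_segment_ge (o : Orientation ℝ (EuclideanSpace ℝ (Fin 2)) (Fin 2))
    (a b ν : EuclideanSpace ℝ (Fin 2)) {lam : ℝ} (hlam : 0 ≤ lam) :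
    ENNReal.ofReal (2 * lam * |o.areaForm (b - a) ν|) ≤ volume (enlarge (segment ℝ a b) lam ν) := by
  calc ENNReal.ofReal (2 * lam * |o.areaForm (b - a) ν|)
      = volume ((a - lam • ν) +ᵥ parallelepiped ![b - a, (2 * lam) • ν]) := by
        rw [measure_vadd, volume_parallelepiped_pair o, map_smul, smul_eq_mul, abs_mul,
          abs_of_nonneg (by positivity : (0:ℝ) ≤ 2 * lam)]
    _ ≤ _ := measure_mono (vadd_parallelepiped_subset_enlarge_segment a b ν hlam)

theorem ofReal_sub_le_hausdorffMeasure_of_Icc_subset_image {X : Type*} [EMetricSpace X]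
    [MeasurableSpace X] [BorelSpace X] {f : X → ℝ} (hf : LipschitzWith 1 f) {s : Set X}
    {c d : ℝ} (h : Icc c d ⊆ f '' s) : ENNReal.ofReal (d - c) ≤ μH[1] s :=
  calc ENNReal.ofReal (d - c) = μH[1] (Icc c d) := by
        rw [hausdorffMeasure_real, Real.volume_Icc]
    _ ≤ μH[1] (f '' s) := measure_mono h
    _ ≤ 1 ^ (1 : ℝ) * μH[1] s := hf.hausdorffMeasure_image_le zero_le_one s
    _ = μH[1] s := by simp

section SphereCap

variable {E : Type*} [NormedAddCommGroup E] [InnerProductSpace ℝ E]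

def sphereCap (e : E) : Set E := sphere 0 1 ∩ {ν | √2 / 2 ≤ ⟪e, ν⟫}

theorem isClosed_sphereCap (e : E) : IsClosed (sphereCap e) :=
  isClosed_sphere.inter (isClosed_le continuous_const (continuous_const.inner continuous_id))

variable [MeasurableSpace E] [BorelSpace E]

theorem ofReal_sqrt_two_le_hausdorffMeasure_sphereCap {u e : E} (hu : ‖u‖ = 1) (he : ‖e‖ = 1)
    (hue : ⟪u, e⟫ = 0) : ENNReal.ofReal √2 ≤ μH[1] (sphereCap e) := by
  have hlip : LipschitzWith 1 (fun ν : E => ⟪u, ν⟫) := by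
    refine (innerSL ℝ u).lipschitz.weaken ?_
    rw [← NNReal.coe_le_coe, coe_nnnorm, innerSL_apply_norm, hu, NNReal.coe_one]
  convert ofReal_sub_le_hausdorffMeasure_of_Icc_subset_image hlip
    (c := -(√2 / 2)) (d := √2 / 2) ?_ using 2
  · ring
  rintro x ⟨hx₁, hx₂⟩
  have h2 : √2 ^ 2 = 2 := Real.sq_sqrt zero_le_two
  have hx : x ^ 2 ≤ 1 / 2 := by nlinarith
  set y := √(1 - x ^ 2)
  have hy : y ^ 2 = 1 - x ^ 2 := Real.sq_sqrt (by linarith)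
  have hy' : √2 / 2 ≤ y := by
    nlinarith [Real.sqrt_nonneg (1 - x ^ 2), Real.sqrt_nonneg 2]
  have heu : ⟪e, u⟫ = 0 := by rw [real_inner_comm, hue]
  refine ⟨x • u + y • e, ⟨?_, ?_⟩, ?_⟩
  · rw [mem_sphere_zero_iff_norm, ← pow_eq_one_iff_of_nonneg (norm_nonneg _) two_ne_zero,
      norm_add_sq_real, norm_smul, norm_smul, real_inner_smul_left, real_inner_smul_right, hue, hu, he]
    simp only [Real.norm_eq_abs, mul_one, mul_zero, add_zero, sq_abs]
    linarith
  · simp [inner_add_right, real_inner_smul_right, heu, he, hy']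
  · simp [inner_add_right, real_inner_smul_right, hue, hu]

theorem two_le_lintegral_sphere_abs_inner {u e : E} (hu : ‖u‖ = 1) (he : ‖e‖ = 1)
    (hue : ⟪u, e⟫ = 0) :
    2 ≤ ∫⁻ ν in sphere (0 : E) 1, ENNReal.ofReal |⟪e, ν⟫| ∂μH[1] := by
  have hdisj : Disjoint (sphereCap e) (sphereCap (-e)) := by
    refine Set.disjoint_left.2 fun ν h₁ h₂ => ?_
    have h₁' : √2 / 2 ≤ ⟪e, ν⟫ := h₁.2
    have h₂' : √2 / 2 ≤ ⟪-e, ν⟫ := h₂.2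
    rw [inner_neg_left] at h₂'
    linarith [Real.sqrt_pos.2 zero_lt_two]
  have hbound : ∀ ν ∈ sphereCap e ∪ sphereCap (-e),
      ENNReal.ofReal (√2 / 2) ≤ ENNReal.ofReal |⟪e, ν⟫| := by
    rintro ν (h | h) <;> apply ENNReal.ofReal_le_ofReal
    · exact h.2.trans (le_abs_self _)
    · have h' : √2 / 2 ≤ ⟪-e, ν⟫ := h.2
      rw [inner_neg_left] at h'
      exact h'.trans (neg_le_abs _)
  have hu' : ⟪u, -e⟫ = 0 := by rw [inner_neg_right, hue, neg_zero]
  calc (2 : ℝ≥0∞) = ENNReal.ofReal (√2 / 2) * (ENNReal.ofReal √2 + ENNReal.ofReal √2) := by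
        rw [← ENNReal.ofReal_add (by positivity) (by positivity),
          ← ENNReal.ofReal_mul (by positivity), show √2 / 2 * (√2 + √2) = 2 by nlinarith [Real.sq_sqrt zero_le_two]]
        simp
    _ ≤ ENNReal.ofReal (√2 / 2) * (μH[1] (sphereCap e) + μH[1] (sphereCap (-e))) := by
        gcongr
        · exact ofReal_sqrt_two_le_hausdorffMeasure_sphereCap hu he hue
        · exact ofReal_sqrt_two_le_hausdorffMeasure_sphereCap hu (by rw [norm_neg, he]) hu'
    _ = ∫⁻ _ in sphereCap e ∪ sphereCap (-e), ENNReal.ofReal (√2 / 2) ∂μH[1] := by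
        rw [setLIntegral_const, measure_union hdisj (isClosed_sphereCap _).measurableSet,
          mul_comm]
    _ ≤ ∫⁻ ν in sphereCap e ∪ sphereCap (-e), ENNReal.ofReal |⟪e, ν⟫| ∂μH[1] :=
        setLIntegral_mono' ((isClosed_sphereCap _).union (isClosed_sphereCap _)).measurableSet
          hbound
    _ ≤ ∫⁻ ν in sphere (0 : E) 1, ENNReal.ofReal |⟪e, ν⟫| ∂μH[1] :=
        lintegral_mono_set (union_subset inter_subset_left inter_subset_left)

theorem ofReal_two_mul_norm_le_lintegral_sphere_abs_inner [Fact (Module.finrank ℝ E = 2)]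
    (o : Orientation ℝ E (Fin 2)) (w : E) :
    ENNReal.ofReal (2 * ‖w‖) ≤ ∫⁻ ν in sphere (0 : E) 1, ENNReal.ofReal |⟪w, ν⟫| ∂μH[1] := by
  rcases eq_or_ne w 0 with rfl | hw
  · simp
  have he : ‖‖w‖⁻¹ • w‖ = 1 := norm_smul_inv_norm hw
  calc ENNReal.ofReal (2 * ‖w‖) = ENNReal.ofReal ‖w‖ * 2 := by
        rw [mul_comm, ENNReal.ofReal_mul (norm_nonneg _), ENNReal.ofReal_ofNat]
    _ ≤ ENNReal.ofReal ‖w‖ *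
          ∫⁻ ν in sphere (0 : E) 1, ENNReal.ofReal |⟪‖w‖⁻¹ • w, ν⟫| ∂μH[1] := by
        gcongr
        exact two_le_lintegral_sphere_abs_inner (by rw [LinearIsometryEquiv.norm_map, he]) he
          (o.inner_rightAngleRotation_self _)
    _ = ∫⁻ ν in sphere (0 : E) 1, ENNReal.ofReal |⟪w, ν⟫| ∂μH[1] := by
        rw [← lintegral_const_mul' _ _ ENNReal.ofReal_ne_top]
        congr 1 with ν
        rw [← ENNReal.ofReal_mul (norm_nonneg _), real_inner_smul_left, abs_mul, abs_inv,
          abs_norm, mul_inv_cancel_left₀ (norm_ne_zero_iff.2 hw)]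

end SphereCap

/-- For a segment `[a,b] ⊂ ℝ²` and any `λ > 0`,
`I_λ([a,b]) ≥ (2/π)|a − b|`. -/
theorem stmt_9 (a b : EuclideanSpace ℝ (Fin 2)) (lam : ℝ) (hlam : 0 < lam) :
    ENNReal.ofReal ((2 / Real.pi) * dist a b) ≤ Ilam lam (segment ℝ a b) := by
  let o : Orientation ℝ (EuclideanSpace ℝ (Fin 2)) (Fin 2) :=
    (EuclideanSpace.basisFun (Fin 2) ℝ).toBasis.orientation
  set w := o.rightAngleRotation (b - a)
  have hw : ‖w‖ = dist a b := by rw [LinearIsometryEquiv.norm_map, dist_comm, dist_eq_norm]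
  calc ENNReal.ofReal ((2 / Real.pi) * dist a b)
      = ENNReal.ofReal (1 / (2 * lam * Real.pi)) *
          (ENNReal.ofReal (2 * lam) * ENNReal.ofReal (2 * ‖w‖)) := by
        rw [← ENNReal.ofReal_mul (by positivity), ← ENNReal.ofReal_mul (by positivity), hw]
        congr 1
        field_simp
    _ ≤ ENNReal.ofReal (1 / (2 * lam * Real.pi)) *
          ∫⁻ ν in sphere 0 1, ENNReal.ofReal (2 * lam) * ENNReal.ofReal |⟪w, ν⟫| ∂μH[1] := by
        rw [lintegral_const_mul' _ _ ENNReal.ofReal_ne_top]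
        gcongr
        exact ofReal_two_mul_norm_le_lintegral_sphere_abs_inner o w
    _ ≤ Ilam lam (segment ℝ a b) := by
        unfold Ilam
        gcongr with ν
        rw [← ENNReal.ofReal_mul (by positivity), o.inner_rightAngleRotation_left]
        exact volume_enlarge_segment_ge o a b ν hlam.le
end
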